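/- arXiv:1806.03907 — 4 statements merged into one kernel-verified Lean document; each statement's English description precedes it below -/
import Mathlib

section
/- Let x = P(x) be a minimax-PPS with greatest fixed point g* ∈ [0,1]^n. Then there exists a mixed policy σ* for the max player such that g*_{σ*,*} = g*; indeed, one may take σ*(i) to be any mixed strategy on the rows attaining the value Val(A_i(g*)) of the matrix game A_i(g*). (This is the equational content of the statement that in a branching concurrent stochastic game the player maximizing the non-reachability probability has an optimal mixed static strategy.) -/
open Filter Topology

/-- A probabilistic polynomial in `n` variables: `∑ r, p r * x ^ expo r`,
with nonnegative coefficients summing to at most 1. -/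
structure ProbPoly (n : ℕ) where
  numTerms : ℕ
  p : Fin numTerms → ℝ
  expo : Fin numTerms → Fin n → ℕ
  p_nonneg : ∀ r, 0 ≤ p r
  p_sum_le_one : ∑ r, p r ≤ 1

/-- Evaluation of a probabilistic polynomial. -/
def ProbPoly.eval {n : ℕ} (P : ProbPoly n) (x : Fin n → ℝ) : ℝ :=
  ∑ r, P.p r * ∏ i, x i ^ P.expo r i

/-- The unit box `[0,1]^n`. -/
def box01 (n : ℕ) : Set (Fin n → ℝ) := {x | ∀ i, 0 ≤ x i ∧ x i ≤ 1}

/-- The minimax value of the zero-sum matrix game with payoff matrix `B`: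
`Val(B) = max_{s ∈ Δ_k} min_{t ∈ Δ_m} sᵀ B t`. -/
noncomputable def gameVal {k m : ℕ} (B : Matrix (Fin k) (Fin m) ℝ) : ℝ :=
  ⨆ s : stdSimplex ℝ (Fin k), ⨅ t : stdSimplex ℝ (Fin m),
    ∑ i : Fin k, ∑ j : Fin m, s.1 i * B i j * t.1 j

/-- A probability distribution on `Fin k`. -/
def IsDist {k : ℕ} (d : Fin k → ℝ) : Prop := (∀ j, 0 ≤ d j) ∧ ∑ j, d j = 1

/-- `g` is the greatest fixed point of `F` in `[0,1]^n`. -/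
def IsGFP {n : ℕ} (F : (Fin n → ℝ) → Fin n → ℝ) (g : Fin n → ℝ) : Prop :=
  g ∈ box01 n ∧ F g = g ∧ ∀ g' ∈ box01 n, F g' = g' → g' ≤ g

/-- `q` is the least fixed point of `F` in `[0,1]^n`. -/
def IsLFP {n : ℕ} (F : (Fin n → ℝ) → Fin n → ℝ) (q : Fin n → ℝ) : Prop :=
  q ∈ box01 n ∧ F q = q ∧ ∀ q' ∈ box01 n, F q' = q' → q ≤ q'

/-- A minimax probabilistic polynomial system (minimax-PPS) in `n` variables:
for each `i`, an `nr i × nc i` matrix of probabilistic polynomials. -/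
structure MinimaxPPS (n : ℕ) where
  nr : Fin n → ℕ
  nc : Fin n → ℕ
  nr_pos : ∀ i, 0 < nr i
  nc_pos : ∀ i, 0 < nc i
  q : (i : Fin n) → Fin (nr i) → Fin (nc i) → ProbPoly n

namespace MinimaxPPS

/-- The payoff matrix `A_i(x)`. -/
noncomputable def A {n : ℕ} (P : MinimaxPPS n) (i : Fin n) (x : Fin n → ℝ) :
    Matrix (Fin (P.nr i)) (Fin (P.nc i)) ℝ :=
  Matrix.of fun j k => (P.q i j k).eval x

/-- `P(x)`: coordinatewise the value of the matrix game `A_i(x)`. -/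
noncomputable def eval {n : ℕ} (P : MinimaxPPS n) (x : Fin n → ℝ) : Fin n → ℝ :=
  fun i => gameVal (P.A i x)

/-- The minPPS `P_{σ,*}` obtained by fixing a mixed policy `σ` for the max player. -/
noncomputable def fixMax {n : ℕ} (P : MinimaxPPS n)
    (σ : (i : Fin n) → Fin (P.nr i) → ℝ) (x : Fin n → ℝ) : Fin n → ℝ :=
  fun i => ⨅ k : Fin (P.nc i), ∑ j, σ i j * (P.q i j k).eval x

/-- The maxPPS `P_{*,τ}` obtained by fixing a mixed policy `τ` for the min player. -/
noncomputable def fixMin {n : ℕ} (P : MinimaxPPS n)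
    (τ : (i : Fin n) → Fin (P.nc i) → ℝ) (x : Fin n → ℝ) : Fin n → ℝ :=
  fun i => ⨆ j : Fin (P.nr i), ∑ k, τ i k * (P.q i j k).eval x

/-- The PPS `P_{σ,τ}` obtained by fixing both policies. -/
def fixBoth {n : ℕ} (P : MinimaxPPS n)
    (σ : (i : Fin n) → Fin (P.nr i) → ℝ) (τ : (i : Fin n) → Fin (P.nc i) → ℝ)
    (x : Fin n → ℝ) : Fin n → ℝ :=
  fun i => ∑ j, ∑ k, σ i j * τ i k * (P.q i j k).eval x

end MinimaxPPS

/-- A PPS: each coordinate is a probabilistic polynomial. -/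
structure PPS (n : ℕ) where
  poly : Fin n → ProbPoly n

namespace PPS

def eval {n : ℕ} (P : PPS n) (x : Fin n → ℝ) : Fin n → ℝ := fun i => (P.poly i).eval x

/-- Edge of the dependency graph: `x_j` appears (with a nonzero coefficient) in `P_i(x)`. -/
def depends {n : ℕ} (P : PPS n) (i j : Fin n) : Prop :=
  ∃ r, (P.poly i).p r ≠ 0 ∧ (P.poly i).expo r j ≠ 0

end PPS

/-- A probabilistic polynomial is linear degenerate: every term with nonzero coefficient
has total degree exactly 1 (so it is linear with no constant term), and the
coefficients sum to exactly 1. -/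
def IsLDPoly {n : ℕ} (Q : ProbPoly n) : Prop :=
  (∀ r, Q.p r ≠ 0 → ∑ j, Q.expo r j = 1) ∧ ∑ r, Q.p r = 1

/-- There exists a bottom strongly connected component of the dependency relation `dep`
all of whose members satisfy `ld`. -/
def IsLDBottom {n : ℕ} (dep : Fin n → Fin n → Prop) (ld : Fin n → Prop) : Prop :=
  ∃ S : Set (Fin n), S.Nonempty ∧
    (∀ i ∈ S, ∀ j ∈ S, Relation.ReflTransGen dep i j) ∧
    (∀ i ∈ S, ∀ j, dep i j → j ∈ S) ∧
    (∀ i ∈ S, ld i)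

/-- A PPS is linear degenerate free (LDF): no bottom strongly connected component of its
dependency graph induces an LD subsystem. -/
def PPS.IsLDF {n : ℕ} (P : PPS n) : Prop :=
  ¬ IsLDBottom P.depends (fun i => IsLDPoly (P.poly i))

namespace MinimaxPPS

/-- Dependency relation of the PPS `P_{σ,τ}`. -/
def dependsMix {n : ℕ} (P : MinimaxPPS n) (σ : (i : Fin n) → Fin (P.nr i) → ℝ)
    (τ : (i : Fin n) → Fin (P.nc i) → ℝ) (i j : Fin n) : Prop :=
  ∃ a b r, σ i a ≠ 0 ∧ τ i b ≠ 0 ∧ (P.q i a b).p r ≠ 0 ∧ (P.q i a b).expo r j ≠ 0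

/-- Coordinate `i` of the PPS `P_{σ,τ}` is linear degenerate. -/
def IsLDMixAt {n : ℕ} (P : MinimaxPPS n) (σ : (i : Fin n) → Fin (P.nr i) → ℝ)
    (τ : (i : Fin n) → Fin (P.nc i) → ℝ) (i : Fin n) : Prop :=
  (∀ a b r, σ i a ≠ 0 → τ i b ≠ 0 → (P.q i a b).p r ≠ 0 → ∑ j, (P.q i a b).expo r j = 1) ∧
  (∑ a, ∑ b, σ i a * τ i b * ∑ r, (P.q i a b).p r) = 1

/-- A mixed min-player policy `τ` is LDF if for every mixed max-player policy `σ`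
the PPS `P_{σ,τ}` is an LDF-PPS. -/
def IsLDFPolicy {n : ℕ} (P : MinimaxPPS n) (τ : (i : Fin n) → Fin (P.nc i) → ℝ) : Prop :=
  ∀ σ : (i : Fin n) → Fin (P.nr i) → ℝ, (∀ i, IsDist (σ i)) →
    ¬ IsLDBottom (P.dependsMix σ τ) (P.IsLDMixAt σ τ)

end MinimaxPPS

/-- The three forms of equations in an SNF minimax-PPS. -/
inductive SNFForm | L | Q | M
  deriving DecidableEq

/-- A minimax-PPS in simple normal form (SNF): each coordinate is of form L
(linear, `a0 i + ∑ j, a i j * x j`), form Q (`x (quadL i) * x (quadR i)`), or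
form M (the value of a matrix game each of whose entries is a variable or the
constant 1, encoded by `Option (Fin n)` with `none` standing for `1`). -/
structure SNFPPS (n : ℕ) where
  form : Fin n → SNFForm
  a0 : Fin n → ℝ
  a : Fin n → Fin n → ℝ
  quadL : Fin n → Fin n
  quadR : Fin n → Fin n
  nr : Fin n → ℕ
  nc : Fin n → ℕ
  nr_pos : ∀ i, 0 < nr i
  nc_pos : ∀ i, 0 < nc i
  entry : (i : Fin n) → Fin (nr i) → Fin (nc i) → Option (Fin n)
  a0_nonneg : ∀ i, 0 ≤ a0 i
  a_nonneg : ∀ i j, 0 ≤ a i j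
  a_sum_le_one : ∀ i, a0 i + ∑ j, a i j ≤ 1

namespace SNFPPS

noncomputable def eval {n : ℕ} (P : SNFPPS n) (x : Fin n → ℝ) : Fin n → ℝ := fun i =>
  match P.form i with
  | SNFForm.L => P.a0 i + ∑ j, P.a i j * x j
  | SNFForm.Q => x (P.quadL i) * x (P.quadR i)
  | SNFForm.M => gameVal (Matrix.of fun j k => (P.entry i j k).elim 1 x)

/-- The maxPPS `P_{*,τ}` obtained by fixing a mixed policy `τ` for the min player. -/
noncomputable def fixMin {n : ℕ} (P : SNFPPS n)
    (τ : (i : Fin n) → Fin (P.nc i) → ℝ) (x : Fin n → ℝ) : Fin n → ℝ := fun i =>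
  match P.form i with
  | SNFForm.L => P.a0 i + ∑ j, P.a i j * x j
  | SNFForm.Q => x (P.quadL i) * x (P.quadR i)
  | SNFForm.M => ⨆ j : Fin (P.nr i), ∑ k, τ i k * (P.entry i j k).elim 1 x

/-- The minPPS `P_{σ,*}` obtained by fixing a mixed policy `σ` for the max player. -/
noncomputable def fixMax {n : ℕ} (P : SNFPPS n)
    (σ : (i : Fin n) → Fin (P.nr i) → ℝ) (x : Fin n → ℝ) : Fin n → ℝ := fun i =>
  match P.form i with
  | SNFForm.L => P.a0 i + ∑ j, P.a i j * x j
  | SNFForm.Q => x (P.quadL i) * x (P.quadR i)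
  | SNFForm.M => ⨅ k : Fin (P.nc i), ∑ j, σ i j * (P.entry i j k).elim 1 x

/-- `S` is closed under the rules defining the least closure set: it contains every
deficient form-L variable, and is closed under rules (a) and (b). -/
def Closed {n : ℕ} (P : SNFPPS n) (S : Set (Fin n)) : Prop :=
  (∀ i, P.form i = SNFForm.L → P.a0 i + ∑ j, P.a i j < 1 → i ∈ S) ∧
  (∀ i, P.form i = SNFForm.L → (∃ j ∈ S, P.a i j ≠ 0) → i ∈ S) ∧
  (∀ i, P.form i = SNFForm.Q → (P.quadL i ∈ S ∨ P.quadR i ∈ S) → i ∈ S) ∧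
  (∀ i, P.form i = SNFForm.M →
    (∀ r : Fin (P.nr i), ∃ c : Fin (P.nc i), ∃ v ∈ S, P.entry i r c = some v) → i ∈ S)

/-- The least closure set `S`. -/
def leastClosure {n : ℕ} (P : SNFPPS n) : Set (Fin n) := ⋂₀ {S | P.Closed S}

end SNFPPS

/-- Labels for the three sets in the limit-sure construction: `s` (the set `S ∪ {1}`),
`f` (the set `F`), and `o` (the remaining set `O`). -/
inductive Lab | s | f | o
  deriving DecidableEq

/-! An optimal row strategy `σ` of every game `A_i(g*)` makes `g*` a fixed point of `P_{σ,*}`,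
so `g* ≤ g*_{σ,*}`. Conversely `P_{σ,*} ≤ P` for every policy `σ`, so `g*_{σ,*}` is a post-fixed
point of the monotone map `P` on `[0,1]^n` and lies below `g*` by Knaster–Tarski. Optimal row
strategies exist because the simplex is compact and `s ↦ min_k (sᵀ A)_k` is continuous. -/

open Set Matrix

section MatrixGame

variable {ι : Type*} [Fintype ι] {k m : ℕ}

lemma iInf_stdSimplex_dotProduct [Nonempty ι] (w : ι → ℝ) :
    ⨅ t : stdSimplex ℝ ι, w ⬝ᵥ t.1 = ⨅ j, w j := by
  classical
  have hbdd : BddBelow (range w) := (finite_range w).bddBelow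
  have hle (t : stdSimplex ℝ ι) : ⨅ j, w j ≤ w ⬝ᵥ t.1 :=
    calc ⨅ j, w j = ∑ j, (⨅ j, w j) * t.1 j := by rw [← Finset.mul_sum, t.2.2, mul_one]
      _ ≤ w ⬝ᵥ t.1 := Finset.sum_le_sum fun j _ =>
        mul_le_mul_of_nonneg_right (ciInf_le hbdd j) (t.2.1 j)
  refine le_antisymm (le_ciInf fun j => ?_) (le_ciInf hle)
  refine ciInf_le_of_le ⟨_, forall_mem_range.2 hle⟩ (stdSimplex.vertex j) ?_
  simp [dotProduct_single]

lemma sum_sum_mul_mul_eq_vecMul_dotProduct (s : Fin k → ℝ) (B : Matrix (Fin k) (Fin m) ℝ)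
    (t : Fin m → ℝ) : ∑ i, ∑ j, s i * B i j * t j = (s ᵥ* B) ⬝ᵥ t := by
  simp only [dotProduct, vecMul, Finset.sum_mul]
  exact Finset.sum_comm

lemma iInf_stdSimplex_sum_sum_mul_mul [Nonempty (Fin m)] (s : Fin k → ℝ)
    (B : Matrix (Fin k) (Fin m) ℝ) :
    ⨅ t : stdSimplex ℝ (Fin m), ∑ i, ∑ j, s i * B i j * t.1 j = ⨅ j, (s ᵥ* B) j := by
  simp only [sum_sum_mul_mul_eq_vecMul_dotProduct]
  exact iInf_stdSimplex_dotProduct _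

lemma gameVal_eq_iSup_iInf_vecMul [Nonempty (Fin m)] (B : Matrix (Fin k) (Fin m) ℝ) :
    gameVal B = ⨆ s : stdSimplex ℝ (Fin k), ⨅ j, (s.1 ᵥ* B) j := by
  simp only [gameVal, iInf_stdSimplex_sum_sum_mul_mul]

lemma continuous_iInf_vecMul [Nonempty (Fin m)] (B : Matrix (Fin k) (Fin m) ℝ) :
    Continuous fun s : Fin k → ℝ => ⨅ j, (s ᵥ* B) j := by
  simp only [← Finset.inf'_univ_eq_ciInf]
  exact Continuous.finset_inf'_apply Finset.univ_nonempty fun j _ => by fun_prop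

lemma bddAbove_range_iInf_vecMul [Nonempty (Fin m)] (B : Matrix (Fin k) (Fin m) ℝ) :
    BddAbove (range fun s : stdSimplex ℝ (Fin k) => ⨅ j, (s.1 ᵥ* B) j) :=
  (isCompact_range ((continuous_iInf_vecMul B).comp continuous_subtype_val)).bddAbove

lemma iInf_vecMul_le_gameVal [Nonempty (Fin m)] (B : Matrix (Fin k) (Fin m) ℝ)
    (s : stdSimplex ℝ (Fin k)) : ⨅ j, (s.1 ᵥ* B) j ≤ gameVal B := by
  rw [gameVal_eq_iSup_iInf_vecMul]
  exact le_ciSup (bddAbove_range_iInf_vecMul B) s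

lemma exists_iInf_stdSimplex_eq_gameVal [Nonempty (Fin k)] [Nonempty (Fin m)]
    (B : Matrix (Fin k) (Fin m) ℝ) :
    ∃ s : stdSimplex ℝ (Fin k),
      ⨅ t : stdSimplex ℝ (Fin m), ∑ i, ∑ j, s.1 i * B i j * t.1 j = gameVal B := by
  obtain ⟨s, -, hmax⟩ :=
    isCompact_univ.exists_isMaxOn (univ_nonempty (α := stdSimplex ℝ (Fin k)))
    ((continuous_iInf_vecMul B).comp continuous_subtype_val).continuousOn
  refine ⟨s, le_antisymm ?_ ?_⟩
  · rw [iInf_stdSimplex_sum_sum_mul_mul]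
    exact iInf_vecMul_le_gameVal B s
  · rw [iInf_stdSimplex_sum_sum_mul_mul, gameVal_eq_iSup_iInf_vecMul]
    exact ciSup_le fun s' => hmax (mem_univ s')

lemma gameVal_mono [Nonempty (Fin m)] {B C : Matrix (Fin k) (Fin m) ℝ}
    (hBC : ∀ i j, B i j ≤ C i j) :
    gameVal B ≤ gameVal C := by
  simp only [gameVal_eq_iSup_iInf_vecMul]
  refine ciSup_mono (bddAbove_range_iInf_vecMul C) fun s =>
    ciInf_mono (finite_range _).bddBelow fun j => ?_
  simp only [vecMul, dotProduct]
  exact Finset.sum_le_sum fun i _ => mul_le_mul_of_nonneg_left (hBC i j) (s.2.1 i)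

lemma gameVal_mem_Icc [Nonempty (Fin k)] [Nonempty (Fin m)] {B : Matrix (Fin k) (Fin m) ℝ}
    (hB : ∀ i j, B i j ∈ Icc (0 : ℝ) 1) : gameVal B ∈ Icc (0 : ℝ) 1 := by
  constructor
  · obtain ⟨s⟩ : Nonempty (stdSimplex ℝ (Fin k)) := inferInstance
    refine le_trans (le_ciInf fun j => ?_) (iInf_vecMul_le_gameVal B s)
    simp only [vecMul, dotProduct]
    exact Finset.sum_nonneg fun i _ => mul_nonneg (s.2.1 i) (hB i j).1
  · rw [gameVal_eq_iSup_iInf_vecMul]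
    refine ciSup_le fun s => ciInf_le_of_le (finite_range _).bddBelow
      (Classical.arbitrary _) ?_
    calc (s.1 ᵥ* B) _ = ∑ i, s.1 i * B i _ := rfl
      _ ≤ ∑ i, s.1 i := Finset.sum_le_sum fun i _ =>
          mul_le_of_le_one_right (s.2.1 i) (hB i _).2
      _ = 1 := s.2.2

end MatrixGame

lemma exists_map_eq_ge_of_le_map {α : Type*} [ConditionallyCompleteLattice α] {a b : α}
    (hab : a ≤ b) {F : α → α} (hmaps : MapsTo F (Icc a b) (Icc a b))
    (hmono : MonotoneOn F (Icc a b)) {y : α} (hy : y ∈ Icc a b) (hle : y ≤ F y) :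
    ∃ z ∈ Icc a b, F z = z ∧ y ≤ z := by
  have : Fact (a ≤ b) := ⟨hab⟩
  let G : Icc a b →o Icc a b :=
    ⟨fun x => ⟨F x, hmaps x.2⟩, fun x x' hxx' => hmono x.2 x'.2 hxx'⟩
  exact ⟨G.gfp, G.gfp.2, congrArg Subtype.val G.map_gfp,
    G.le_gfp (a := ⟨y, hy⟩) hle⟩

lemma box01_eq_Icc (n : ℕ) : box01 n = Icc 0 1 := by
  ext x
  simp [box01, Pi.le_def, forall_and]

lemma IsGFP.le_of_le_map {n : ℕ} {F : (Fin n → ℝ) → Fin n → ℝ} {g : Fin n → ℝ}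
    (hg : IsGFP F g) (hmaps : MapsTo F (box01 n) (box01 n)) (hmono : MonotoneOn F (box01 n))
    {y : Fin n → ℝ} (hy : y ∈ box01 n) (hle : y ≤ F y) : y ≤ g := by
  rw [box01_eq_Icc] at hmaps hmono hy
  obtain ⟨z, hz, hFz, hyz⟩ := exists_map_eq_ge_of_le_map zero_le_one hmaps hmono hy hle
  exact hyz.trans (hg.2.2 z ((box01_eq_Icc n).symm ▸ hz) hFz)

namespace ProbPoly

variable {n : ℕ} (Q : ProbPoly n)

lemma eval_nonneg {x : Fin n → ℝ} (hx : 0 ≤ x) : 0 ≤ Q.eval x :=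
  Finset.sum_nonneg fun r _ => mul_nonneg (Q.p_nonneg r) (Finset.prod_nonneg fun i _ =>
    pow_nonneg (hx i) _)

lemma eval_le_one {x : Fin n → ℝ} (hx : x ∈ box01 n) : Q.eval x ≤ 1 :=
  calc Q.eval x ≤ ∑ r, Q.p r := Finset.sum_le_sum fun r _ =>
        mul_le_of_le_one_right (Q.p_nonneg r) (Finset.prod_le_one
          (fun i _ => pow_nonneg (hx i).1 _) fun i _ => pow_le_one₀ (hx i).1 (hx i).2)
    _ ≤ 1 := Q.p_sum_le_one

lemma eval_mono {x y : Fin n → ℝ} (hx : 0 ≤ x) (hxy : x ≤ y) : Q.eval x ≤ Q.eval y :=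
  Finset.sum_le_sum fun r _ => mul_le_mul_of_nonneg_left (Finset.prod_le_prod
    (fun i _ => pow_nonneg (hx i) _) fun i _ => pow_le_pow_left₀ (hx i) (hxy i) _)
    (Q.p_nonneg r)

end ProbPoly

namespace MinimaxPPS

variable {n : ℕ} (P : MinimaxPPS n)

instance (i : Fin n) : NeZero (P.nr i) := ⟨(P.nr_pos i).ne'⟩

instance (i : Fin n) : NeZero (P.nc i) := ⟨(P.nc_pos i).ne'⟩

lemma eval_mapsTo : MapsTo P.eval (box01 n) (box01 n) := fun _ hx i =>
  gameVal_mem_Icc fun j k => ⟨(P.q i j k).eval_nonneg fun l => (hx l).1,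
    (P.q i j k).eval_le_one hx⟩

lemma eval_monotoneOn : MonotoneOn P.eval (box01 n) := fun _ hx _ _ hxy i =>
  gameVal_mono fun j k => (P.q i j k).eval_mono (fun l => (hx l).1) hxy

lemma fixMax_le_eval {σ : (i : Fin n) → Fin (P.nr i) → ℝ} (hσ : ∀ i, IsDist (σ i))
    {x : Fin n → ℝ} : P.fixMax σ x ≤ P.eval x := fun i =>
  iInf_vecMul_le_gameVal (P.A i x) ⟨σ i, hσ i⟩

lemma fixMax_apply_eq_eval_of_optimal (σ : (i : Fin n) → Fin (P.nr i) → ℝ) {x : Fin n → ℝ}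
    {i : Fin n} (hopt : ⨅ t : stdSimplex ℝ (Fin (P.nc i)),
        ∑ j, ∑ k, σ i j * P.A i x j k * t.1 k = gameVal (P.A i x)) :
    P.fixMax σ x i = P.eval x i := by
  rwa [iInf_stdSimplex_sum_sum_mul_mul] at hopt

theorem eq_of_isGFP_fixMax_of_optimal {g : Fin n → ℝ} (hg : IsGFP P.eval g)
    {σ : (i : Fin n) → Fin (P.nr i) → ℝ} (hσ : ∀ i, IsDist (σ i))
    (hopt : ∀ i, ⨅ t : stdSimplex ℝ (Fin (P.nc i)),
        ∑ j, ∑ k, σ i j * P.A i g j k * t.1 k = gameVal (P.A i g))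
    {gσ : Fin n → ℝ} (hgσ : IsGFP (P.fixMax σ) gσ) : gσ = g := by
  have hg_fix : P.fixMax σ g = g := funext fun i =>
    (P.fixMax_apply_eq_eval_of_optimal σ (hopt i)).trans (congrFun hg.2.1 i)
  have hgσ_post : gσ ≤ P.eval gσ :=
    calc gσ = P.fixMax σ gσ := hgσ.2.1.symm
      _ ≤ P.eval gσ := P.fixMax_le_eval hσ
  exact le_antisymm (hg.le_of_le_map P.eval_mapsTo P.eval_monotoneOn hgσ.1 hgσ_post)
    (hgσ.2.2 g hg.1 hg_fix)

end MinimaxPPS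

/-- For a minimax-PPS with greatest fixed point `g*`, there exists a
mixed policy `σ*` for the max player with `g*_{σ*,*} = g*`; indeed any mixed policy
`σ` that, at every `i`, attains the value `Val(A_i(g*))` of the matrix game `A_i(g*)`
satisfies `g*_{σ,*} = g*`. -/
theorem minimaxPPS_max_has_optimal_policy_GFP {n : ℕ} (P : MinimaxPPS n)
    (g : Fin n → ℝ) (hg : IsGFP P.eval g) :
    (∃ σ : (i : Fin n) → Fin (P.nr i) → ℝ, (∀ i, IsDist (σ i)) ∧
      ∀ gσ, IsGFP (P.fixMax σ) gσ → gσ = g) ∧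
    (∀ σ : (i : Fin n) → Fin (P.nr i) → ℝ, (∀ i, IsDist (σ i)) →
      (∀ i : Fin n,
        (⨅ t : stdSimplex ℝ (Fin (P.nc i)),
          ∑ j : Fin (P.nr i), ∑ k : Fin (P.nc i), σ i j * P.A i g j k * t.1 k)
          = gameVal (P.A i g)) →
      ∀ gσ, IsGFP (P.fixMax σ) gσ → gσ = g) := by
  refine ⟨?_, fun _ hσ hopt _ => P.eq_of_isGFP_fixMax_of_optimal hg hσ hopt⟩
  choose s hs using fun i => exists_iInf_stdSimplex_eq_gameVal (P.A i g)
  exact ⟨fun i => s i, fun i => (s i).2,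
    fun _ => P.eq_of_isGFP_fixMax_of_optimal hg (fun i => (s i).2) hs⟩
end

section
/- Let x = P(x) be an SNF minimax-PPS with greatest fixed point g* ∈ [0,1]^n, and let S be the least closure set of variables. Then there exists a single mixed policy τ for the min player such that (g*_{*,τ})_i < 1 for every variable x_i ∈ S; consequently g*_i < 1 for all x_i ∈ S. -/
open Filter Topology

private lemma aux_L1 {n : ℕ} (a0 : ℝ) (a h : Fin n → ℝ)
    (ha : ∀ j, 0 ≤ a j) (hh : ∀ j, h j ≤ 1) (hdef : a0 + ∑ j, a j < 1) :
    a0 + ∑ j, a j * h j < 1 := by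
  have : ∑ j, a j * h j ≤ ∑ j, a j :=
    Finset.sum_le_sum fun j _ => mul_le_of_le_one_right (ha j) (hh j)
  linarith

private lemma aux_L2 {n : ℕ} (a0 : ℝ) (a h : Fin n → ℝ)
    (ha : ∀ j, 0 ≤ a j) (hh0 : ∀ j, 0 ≤ h j) (hh : ∀ j, h j ≤ 1)
    (hle : a0 + ∑ j, a j ≤ 1) (j0 : Fin n) (hj0 : h j0 < 1) (haj : a j0 ≠ 0) :
    a0 + ∑ j, a j * h j < 1 := by
  have hlt : ∑ j, a j * h j < ∑ j, a j := by
    refine Finset.sum_lt_sum (fun j _ => mul_le_of_le_one_right (ha j) (hh j))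
      ⟨j0, Finset.mem_univ _, ?_⟩
    have h0 : 0 < a j0 := (ha j0).lt_of_ne (Ne.symm haj)
    nlinarith
  linarith

private lemma aux_row {m : ℕ} (e : Fin m → ℝ) (he1 : ∀ k, e k ≤ 1)
    (k0 : Fin m) (hk0 : e k0 < 1) : (m : ℝ)⁻¹ * ∑ k, e k < 1 := by
  have hm : 0 < m := k0.pos
  have hmr : (0 : ℝ) < (m : ℝ) := by exact_mod_cast hm
  have hs : ∑ k, e k < (m : ℝ) := by
    calc ∑ k, e k < ∑ _k : Fin m, (1 : ℝ) :=
          Finset.sum_lt_sum (fun k _ => he1 k) ⟨k0, Finset.mem_univ _, hk0⟩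
      _ = (m : ℝ) := by simp
  have := mul_lt_mul_of_pos_left hs (inv_pos.2 hmr)
  rwa [inv_mul_cancel₀ (ne_of_gt hmr)] at this

private lemma aux_gameVal {k m : ℕ} (B : Matrix (Fin k) (Fin m) ℝ) (hk : 0 < k) (hm : 0 < m)
    (hB0 : ∀ j c, 0 ≤ B j c) (hB1 : ∀ j c, B j c ≤ 1)
    (hrow : ∀ j, ∃ c, B j c < 1) : gameVal B < 1 := by
  haveI hknz : Nonempty (Fin k) := ⟨⟨0, hk⟩⟩
  haveI hmnz : Nonempty (Fin m) := ⟨⟨0, hm⟩⟩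
  have hmr : (0 : ℝ) < (m : ℝ) := by exact_mod_cast hm
  set t0 : Fin m → ℝ := fun _ => (m : ℝ)⁻¹ with ht0def
  have ht0 : t0 ∈ stdSimplex ℝ (Fin m) := by
    refine ⟨fun _ => by positivity, ?_⟩
    simp [t0, Finset.sum_const, Finset.card_univ]
    field_simp
  set rv : Fin k → ℝ := fun j => (m : ℝ)⁻¹ * ∑ c, B j c with hrv
  have hrvlt : ∀ j, rv j < 1 := by
    intro j; obtain ⟨c, hc⟩ := hrow j
    exact aux_row _ (hB1 j) c hc
  set cmax : ℝ := Finset.univ.sup' Finset.univ_nonempty rv with hcmax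
  obtain ⟨j1, -, hj1⟩ := Finset.exists_mem_eq_sup' (Finset.univ_nonempty (α := Fin k)) rv
  have hcm1 : cmax < 1 := by rw [hcmax, hj1]; exact hrvlt j1
  haveI : Nonempty (stdSimplex ℝ (Fin k)) := ⟨⟨fun _ => (k : ℝ)⁻¹, fun _ => by positivity, by
    have hkr : (0 : ℝ) < (k : ℝ) := by exact_mod_cast hk
    simp [Finset.sum_const, Finset.card_univ]
    field_simp⟩⟩
  have hsup : gameVal B ≤ cmax := by
    refine ciSup_le fun s => ?_
    have hbdd : BddBelow (Set.range fun t : stdSimplex ℝ (Fin m) =>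
        ∑ i : Fin k, ∑ j : Fin m, s.1 i * B i j * t.1 j) := by
      refine ⟨0, ?_⟩
      rintro y ⟨t, rfl⟩
      refine Finset.sum_nonneg fun i _ => Finset.sum_nonneg fun j _ => ?_
      exact mul_nonneg (mul_nonneg (s.2.1 i) (hB0 i j)) (t.2.1 j)
    have hle1 : (⨅ t : stdSimplex ℝ (Fin m),
        ∑ i : Fin k, ∑ j : Fin m, s.1 i * B i j * t.1 j) ≤
        ∑ i : Fin k, ∑ j : Fin m, s.1 i * B i j * t0 j :=
      ciInf_le hbdd (⟨t0, ht0⟩ : stdSimplex ℝ (Fin m))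
    have hval : ∑ i : Fin k, ∑ j : Fin m, s.1 i * B i j * t0 j = ∑ i : Fin k, s.1 i * rv i := by
      refine Finset.sum_congr rfl fun i _ => ?_
      simp only [rv, t0, Finset.mul_sum]
      exact Finset.sum_congr rfl fun j _ => by ring
    have hle2 : ∑ i : Fin k, s.1 i * rv i ≤ cmax := by
      calc ∑ i : Fin k, s.1 i * rv i ≤ ∑ i : Fin k, s.1 i * cmax :=
            Finset.sum_le_sum fun i _ => mul_le_mul_of_nonneg_left
              (Finset.le_sup' rv (Finset.mem_univ i)) (s.2.1 i)
        _ = cmax := by rw [← Finset.sum_mul, s.2.2, one_mul]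
      
    calc (⨅ t : stdSimplex ℝ (Fin m),
        ∑ i : Fin k, ∑ j : Fin m, s.1 i * B i j * t.1 j) ≤ _ := hle1
      _ = _ := hval
      _ ≤ cmax := hle2
  exact lt_of_le_of_lt hsup hcm1

private lemma aux_closedOf {n : ℕ} (P : SNFPPS n) (h : Fin n → ℝ) (hbox : h ∈ box01 n)
    (hL : ∀ i, P.form i = SNFForm.L → h i = P.a0 i + ∑ j, P.a i j * h j)
    (hQ : ∀ i, P.form i = SNFForm.Q → h i = h (P.quadL i) * h (P.quadR i))
    (hM : ∀ i, P.form i = SNFForm.M →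
      (∀ r : Fin (P.nr i), ∃ c : Fin (P.nc i), ∃ v, h v < 1 ∧ P.entry i r c = some v) →
      h i < 1) :
    P.Closed {i | h i < 1} := by
  refine ⟨?_, ?_, ?_, ?_⟩
  · intro i hf hdef
    simp only [Set.mem_setOf_eq]
    rw [hL i hf]
    exact aux_L1 _ _ _ (P.a_nonneg i) (fun j => (hbox j).2) hdef
  · rintro i hf ⟨j0, hj0, haj⟩
    simp only [Set.mem_setOf_eq]
    rw [hL i hf]
    exact aux_L2 _ _ _ (P.a_nonneg i) (fun j => (hbox j).1) (fun j => (hbox j).2)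
      (P.a_sum_le_one i) j0 hj0 haj
  · intro i hf hor
    simp only [Set.mem_setOf_eq]
    rw [hQ i hf]
    rcases hor with hl | hr
    · exact lt_of_le_of_lt (mul_le_of_le_one_right (hbox _).1 (hbox _).2) hl
    · exact lt_of_le_of_lt (mul_le_of_le_one_left (hbox _).1 (hbox _).2) hr
  · intro i hf hall
    refine hM i hf fun r => ?_
    obtain ⟨c, v, hv, he⟩ := hall r
    exact ⟨c, v, hv, he⟩

/-- For an SNF minimax-PPS with greatest fixed point `g*` and least
closure set `S`, there is a single mixed policy `τ` for the min player such that
`(g*_{*,τ})_i < 1` for every `i ∈ S`; consequently `g*_i < 1` for all `i ∈ S`. -/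
theorem snf_leastClosure_lt_one {n : ℕ} (P : SNFPPS n)
    (g : Fin n → ℝ) (hg : IsGFP P.eval g) :
    ∃ τ : (i : Fin n) → Fin (P.nc i) → ℝ, (∀ i, IsDist (τ i)) ∧
      (∀ gτ, IsGFP (P.fixMin τ) gτ → ∀ i ∈ P.leastClosure, gτ i < 1) ∧
      (∀ i ∈ P.leastClosure, g i < 1) := by
  classical
  obtain ⟨hgbox, hgfix, -⟩ := hg
  set τ : (i : Fin n) → Fin (P.nc i) → ℝ := fun i _ => ((P.nc i : ℝ))⁻¹ with hτdef
  have hdist : ∀ i, IsDist (τ i) := by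
    intro i
    have hc : (0 : ℝ) < (P.nc i : ℝ) := by exact_mod_cast P.nc_pos i
    refine ⟨fun k => by positivity, ?_⟩
    simp [τ, Finset.sum_const, Finset.card_univ]
    field_simp
  have elim_nonneg : ∀ (h : Fin n → ℝ), h ∈ box01 n → ∀ (o : Option (Fin n)),
      0 ≤ o.elim 1 h := by
    intro h hbox o; cases o with
    | none => norm_num
    | some v => exact (hbox v).1
  have elim_le_one : ∀ (h : Fin n → ℝ), h ∈ box01 n → ∀ (o : Option (Fin n)),
      o.elim 1 h ≤ 1 := by
    intro h hbox o; cases o with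
    | none => norm_num
    | some v => exact (hbox v).2
  -- the key closedness fact for any fixed point of fixMin τ
  have keyτ : ∀ gτ : Fin n → ℝ, gτ ∈ box01 n → P.fixMin τ gτ = gτ →
      P.Closed {i | gτ i < 1} := by
    intro gτ hbox hfix
    refine aux_closedOf P gτ hbox ?_ ?_ ?_
    · intro i hf
      have heq := congrFun hfix i
      simp only [SNFPPS.fixMin, hf] at heq
      exact heq.symm
    · intro i hf
      have heq := congrFun hfix i
      simp only [SNFPPS.fixMin, hf] at heq
      exact heq.symm
    · intro i hf hall
      have heq := congrFun hfix i
      simp only [SNFPPS.fixMin, hf] at heq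
      haveI : Nonempty (Fin (P.nr i)) := ⟨⟨0, P.nr_pos i⟩⟩
      obtain ⟨j0, hj0⟩ := exists_eq_ciSup_of_finite
        (f := fun j : Fin (P.nr i) => ∑ k, τ i k * (P.entry i j k).elim 1 gτ)
      rw [← heq, ← hj0]
      obtain ⟨c, v, hv, he⟩ := hall j0
      have hsum : ∑ k, τ i k * (P.entry i j0 k).elim 1 gτ
          = ((P.nc i : ℝ))⁻¹ * ∑ k, (P.entry i j0 k).elim 1 gτ := by
        rw [Finset.mul_sum]
      rw [hsum]
      refine aux_row _ (fun k => elim_le_one gτ hbox _) c ?_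
      rw [he]
      exact hv
  -- closedness for g itself
  have keyg : P.Closed {i | g i < 1} := by
    refine aux_closedOf P g hgbox ?_ ?_ ?_
    · intro i hf
      have heq := congrFun hgfix i
      simp only [SNFPPS.eval, hf] at heq
      exact heq.symm
    · intro i hf
      have heq := congrFun hgfix i
      simp only [SNFPPS.eval, hf] at heq
      exact heq.symm
    · intro i hf hall
      have heq := congrFun hgfix i
      simp only [SNFPPS.eval, hf] at heq
      rw [← heq]
      refine aux_gameVal _ (P.nr_pos i) (P.nc_pos i)
        (fun j c => elim_nonneg g hgbox _) (fun j c => elim_le_one g hgbox _) ?_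
      intro j
      obtain ⟨c, v, hv, he⟩ := hall j
      refine ⟨c, ?_⟩
      show (P.entry i j c).elim 1 g < 1
      rw [he]
      exact hv
  refine ⟨τ, hdist, ?_, ?_⟩
  · rintro gτ ⟨hbox, hfix, -⟩ i hi
    exact Set.mem_sInter.1 hi _ (keyτ gτ hbox hfix)
  · intro i hi
    exact Set.mem_sInter.1 hi _ keyg
end

section
/- Let x = P(x) be an SNF minimax-PPS with greatest fixed point g* ∈ [0,1]^n, and let S be the least closure set of variables. Then there exists a deterministic policy σ for the max player such that (g*_{σ,*})_i = 1 for every variable x_i ∉ S; in particular g*_i = 1 for all x_i ∉ S, and therefore g*_i < 1 if and only if x_i ∈ S. -/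
open Filter Topology

-- ===================== auxiliary lemmas =====================

namespace GVAux

noncomputable def pureV {k : ℕ} (j0 : Fin k) : Fin k → ℝ := fun j => if j = j0 then 1 else 0

lemma pureV_mem {k : ℕ} (j0 : Fin k) : pureV j0 ∈ stdSimplex ℝ (Fin k) := by
  constructor
  · intro x; unfold pureV; split <;> norm_num
  · simp [pureV]

variable {k m : ℕ} (B : Matrix (Fin k) (Fin m) ℝ)

noncomputable def pay (s : Fin k → ℝ) (t : Fin m → ℝ) : ℝ :=
  ∑ i : Fin k, ∑ j : Fin m, s i * B i j * t j

lemma pay_nonneg {s t} (hs : s ∈ stdSimplex ℝ (Fin k)) (ht : t ∈ stdSimplex ℝ (Fin m))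
    (hB : ∀ i j, 0 ≤ B i j) : 0 ≤ pay B s t := by
  apply Finset.sum_nonneg; intro i _; apply Finset.sum_nonneg; intro j _
  exact mul_nonneg (mul_nonneg (hs.1 i) (hB i j)) (ht.1 j)

lemma pay_le_one {s t} (hs : s ∈ stdSimplex ℝ (Fin k)) (ht : t ∈ stdSimplex ℝ (Fin m))
    (hB : ∀ i j, B i j ≤ 1) : pay B s t ≤ 1 := by
  have h : pay B s t ≤ ∑ i : Fin k, ∑ j : Fin m, s i * t j := by
    apply Finset.sum_le_sum; intro i _; apply Finset.sum_le_sum; intro j _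
    calc s i * B i j * t j ≤ s i * 1 * t j := by
          apply mul_le_mul_of_nonneg_right _ (ht.1 j)
          exact mul_le_mul_of_nonneg_left (hB i j) (hs.1 i)
      _ = s i * t j := by ring
  calc pay B s t ≤ ∑ i : Fin k, ∑ j : Fin m, s i * t j := h
    _ = (∑ i : Fin k, s i) * (∑ j : Fin m, t j) := by rw [Finset.sum_mul_sum]
    _ = 1 := by rw [hs.2, ht.2, one_mul]

lemma pay_col (s : Fin k → ℝ) (c : Fin m) : pay B s (pureV c) = ∑ i, s i * B i c := by
  unfold pay pureV
  simp [mul_ite, Finset.sum_ite_eq']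

lemma pay_row (t : Fin m → ℝ) (r : Fin k) : pay B (pureV r) t = ∑ j, B r j * t j := by
  unfold pay pureV
  rw [Finset.sum_eq_single r]
  · simp
  · intro b _ hb; simp [hb]
  · simp

lemma nonemptySimplex {k : ℕ} (hk : 0 < k) : Nonempty (stdSimplex ℝ (Fin k)) :=
  ⟨⟨pureV ⟨0, hk⟩, pureV_mem _⟩⟩

lemma bddBelow_inner {s} (hs : s ∈ stdSimplex ℝ (Fin k)) (hB0 : ∀ i j, 0 ≤ B i j) :
    BddBelow (Set.range fun t : stdSimplex ℝ (Fin m) => pay B s t.1) := by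
  refine ⟨0, fun x hx => ?_⟩
  obtain ⟨t, rfl⟩ := hx
  exact pay_nonneg B hs t.2 hB0

lemma inner_le_col {s} (hs : s ∈ stdSimplex ℝ (Fin k)) (hB0 : ∀ i j, 0 ≤ B i j) (c : Fin m) :
    (⨅ t : stdSimplex ℝ (Fin m), pay B s t.1) ≤ ∑ i, s i * B i c := by
  rw [← pay_col B s c]
  exact ciInf_le (bddBelow_inner B hs hB0) ⟨pureV c, pureV_mem c⟩

lemma le_inner (hm : 0 < m) {s} (c : ℝ) (h : ∀ t : stdSimplex ℝ (Fin m), c ≤ pay B s t.1) :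
    c ≤ ⨅ t : stdSimplex ℝ (Fin m), pay B s t.1 := by
  haveI := nonemptySimplex (k := m) hm
  exact le_ciInf h

lemma inner_le_one (hm : 0 < m) {s} (hs : s ∈ stdSimplex ℝ (Fin k))
    (hB0 : ∀ i j, 0 ≤ B i j) (hB1 : ∀ i j, B i j ≤ 1) :
    (⨅ t : stdSimplex ℝ (Fin m), pay B s t.1) ≤ 1 := by
  obtain ⟨t⟩ := nonemptySimplex (k := m) hm
  exact le_trans (ciInf_le (bddBelow_inner B hs hB0) t) (pay_le_one B hs t.2 hB1)

lemma gameVal_eq_sup : gameVal B = ⨆ s : stdSimplex ℝ (Fin k),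
    ⨅ t : stdSimplex ℝ (Fin m), pay B s.1 t.1 := rfl

lemma gameVal_le (hk : 0 < k) (c : ℝ)
    (h : ∀ s : stdSimplex ℝ (Fin k), (⨅ t : stdSimplex ℝ (Fin m), pay B s.1 t.1) ≤ c) :
    gameVal B ≤ c := by
  haveI := nonemptySimplex (k := k) hk
  rw [gameVal_eq_sup]
  exact ciSup_le h

lemma inner_le_gameVal (hm : 0 < m) (hB0 : ∀ i j, 0 ≤ B i j) (hB1 : ∀ i j, B i j ≤ 1)
    (s : stdSimplex ℝ (Fin k)) :
    (⨅ t : stdSimplex ℝ (Fin m), pay B s.1 t.1) ≤ gameVal B := by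
  rw [gameVal_eq_sup]
  apply le_ciSup (f := fun s : stdSimplex ℝ (Fin k) => ⨅ t : stdSimplex ℝ (Fin m), pay B s.1 t.1)
  refine ⟨1, fun x hx => ?_⟩
  obtain ⟨s', rfl⟩ := hx
  exact inner_le_one B hm s'.2 hB0 hB1

lemma gameVal_le_one (hk : 0 < k) (hm : 0 < m)
    (hB0 : ∀ i j, 0 ≤ B i j) (hB1 : ∀ i j, B i j ≤ 1) : gameVal B ≤ 1 :=
  gameVal_le B hk 1 fun s => inner_le_one B hm s.2 hB0 hB1

lemma gameVal_nonneg (hk : 0 < k) (hm : 0 < m) (hB0 : ∀ i j, 0 ≤ B i j)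
    (hB1 : ∀ i j, B i j ≤ 1) : 0 ≤ gameVal B := by
  obtain ⟨s⟩ := nonemptySimplex (k := k) hk
  refine le_trans ?_ (inner_le_gameVal B hm hB0 hB1 s)
  exact le_inner B hm 0 fun t => pay_nonneg B s.2 t.2 hB0

lemma gameVal_row_ones (hk : 0 < k) (hm : 0 < m)
    (hB0 : ∀ i j, 0 ≤ B i j) (hB1 : ∀ i j, B i j ≤ 1)
    (r : Fin k) (hr : ∀ c, B r c = 1) : gameVal B = 1 := by
  apply le_antisymm (gameVal_le_one B hk hm hB0 hB1)
  refine le_trans ?_ (inner_le_gameVal B hm hB0 hB1 ⟨pureV r, pureV_mem r⟩)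
  apply le_inner B hm
  intro t
  rw [pay_row]
  have h1 : ∀ j, B r j * t.1 j = t.1 j := by intro j; rw [hr j, one_mul]
  simp only [h1]
  rw [t.2.2]

lemma gameVal_mono (hk : 0 < k) (hm : 0 < m) (B' : Matrix (Fin k) (Fin m) ℝ)
    (hB0 : ∀ i j, 0 ≤ B i j) (hB1' : ∀ i j, B' i j ≤ 1) (hB0' : ∀ i j, 0 ≤ B' i j)
    (hle : ∀ i j, B i j ≤ B' i j) : gameVal B ≤ gameVal B' := by
  apply gameVal_le B hk
  intro s
  refine le_trans ?_ (inner_le_gameVal B' hm hB0' hB1' s)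
  haveI := nonemptySimplex (k := m) hm
  apply le_ciInf
  intro t
  refine le_trans (ciInf_le (bddBelow_inner B s.2 hB0) t) ?_
  apply Finset.sum_le_sum; intro i _; apply Finset.sum_le_sum; intro j _
  exact mul_le_mul_of_nonneg_right (mul_le_mul_of_nonneg_left (hle i j) (s.2.1 i)) (t.2.1 j)

lemma gameVal_lt_one (hk : 0 < k) (hm : 0 < m)
    (hB0 : ∀ i j, 0 ≤ B i j) (hB1 : ∀ i j, B i j ≤ 1)
    (c : Fin k → Fin m) (ε : ℝ) (hε : 0 < ε) (hc : ∀ r, B r (c r) ≤ 1 - ε) :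
    gameVal B < 1 := by
  have hk' : (0:ℝ) < k := by exact_mod_cast hk
  have key : gameVal B ≤ 1 - ε / k := by
    apply gameVal_le B hk
    intro s
    obtain ⟨r, -, hr⟩ := Finset.exists_max_image Finset.univ s.1 ⟨⟨0, hk⟩, Finset.mem_univ _⟩
    have hsr : 1 / (k:ℝ) ≤ s.1 r := by
      rw [div_le_iff₀ hk']
      calc (1:ℝ) = ∑ i, s.1 i := s.2.2.symm
        _ ≤ ∑ _i : Fin k, s.1 r := Finset.sum_le_sum fun i _ => hr i (Finset.mem_univ i)
        _ = s.1 r * k := by simp [mul_comm]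
    refine le_trans (inner_le_col B s.2 hB0 (c r)) ?_
    have h1 : ∑ i, s.1 i * B i (c r) ≤ ∑ i, (s.1 i - if i = r then s.1 r * ε else 0) := by
      apply Finset.sum_le_sum
      intro i _
      by_cases hi : i = r
      · subst hi
        rw [if_pos rfl]
        have := mul_le_mul_of_nonneg_left (hc i) (s.2.1 i)
        nlinarith [s.2.1 i]
      · rw [if_neg hi]
        have h2 : s.1 i * B i (c r) ≤ s.1 i * 1 := mul_le_mul_of_nonneg_left (hB1 i (c r)) (s.2.1 i)
        linarith
    rw [Finset.sum_sub_distrib, s.2.2, Finset.sum_ite_eq' Finset.univ r] at h1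
    simp only [Finset.mem_univ, if_pos] at h1
    have h2 : ε / k ≤ s.1 r * ε := by
      rw [div_eq_mul_one_div, mul_comm ε]
      exact mul_le_mul_of_nonneg_right hsr (le_of_lt hε)
    linarith
  have hpos : ε / k > 0 := div_pos hε hk'
  linarith

end GVAux

lemma kt_fixed {n : ℕ} (F : (Fin n → ℝ) → Fin n → ℝ) (S : Set (Fin n))
    (hmap : ∀ x ∈ box01 n, F x ∈ box01 n)
    (hmono : ∀ x ∈ box01 n, ∀ y ∈ box01 n, x ≤ y → F x ≤ F y)
    (hK : ∀ x ∈ box01 n, (∀ i, i ∉ S → x i = 1) → ∀ i, i ∉ S → F x i = 1) :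
    ∃ z ∈ box01 n, F z = z ∧ ∀ i, i ∉ S → z i = 1 := by
  classical
  set D : Set (Fin n → ℝ) :=
    {y | y ∈ box01 n ∧ (∀ i, i ∉ S → y i = 1) ∧ y ≤ F y} with hD
  set y0 : Fin n → ℝ := fun i => if i ∈ S then 0 else 1 with hy0
  have hy0box : y0 ∈ box01 n := by
    intro i; simp only [hy0]; split <;> norm_num
  have hy0one : ∀ i, i ∉ S → y0 i = 1 := by
    intro i hi; simp only [hy0, if_neg hi]
  have hy0D : y0 ∈ D := by
    refine ⟨hy0box, hy0one, ?_⟩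
    intro i
    by_cases hi : i ∈ S
    · simp only [hy0, if_pos hi]
      exact (hmap y0 hy0box i).1
    · rw [hy0one i hi, hK y0 hy0box hy0one i hi]
  have hDne : D.Nonempty := ⟨y0, hy0D⟩
  set z : Fin n → ℝ := fun i => sSup ((fun y => y i) '' D) with hz
  have himgne : ∀ i, ((fun y : Fin n → ℝ => y i) '' D).Nonempty := fun i => hDne.image _
  have hbdd : ∀ i, BddAbove ((fun y : Fin n → ℝ => y i) '' D) := by
    intro i
    refine ⟨1, fun x hx => ?_⟩
    obtain ⟨y, hy, rfl⟩ := hx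
    exact (hy.1 i).2
  have hub : ∀ y ∈ D, y ≤ z := by
    intro y hy i
    exact le_csSup (hbdd i) ⟨y, hy, rfl⟩
  have hzbox : z ∈ box01 n := by
    intro i
    constructor
    · exact le_trans (hy0box i).1 (hub y0 hy0D i)
    · apply csSup_le (himgne i)
      rintro x ⟨y, hy, rfl⟩
      exact (hy.1 i).2
  have hzone : ∀ i, i ∉ S → z i = 1 := by
    intro i hi
    apply le_antisymm (hzbox i).2
    rw [← hy0one i hi]
    exact hub y0 hy0D i
  have hzle : z ≤ F z := by
    intro i
    apply csSup_le (himgne i)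
    rintro x ⟨y, hy, rfl⟩
    exact le_trans (hy.2.2 i) (hmono y hy.1 z hzbox (hub y hy) i)
  have hFzD : F z ∈ D := by
    refine ⟨hmap z hzbox, hK z hzbox hzone, ?_⟩
    exact hmono z hzbox (F z) (hmap z hzbox) hzle
  have hle : F z ≤ z := hub _ hFzD
  exact ⟨z, hzbox, le_antisymm hle hzle, hzone⟩

namespace SNFPPS

variable {n : ℕ} (P : SNFPPS n)

lemma closed_leastClosure : P.Closed P.leastClosure := by
  refine ⟨?_, ?_, ?_, ?_⟩
  · intro i hf hlt
    refine Set.mem_sInter.2 fun T hT => hT.1 i hf hlt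
  · rintro i hf ⟨j, hj, ha⟩
    refine Set.mem_sInter.2 fun T hT => hT.2.1 i hf ⟨j, Set.mem_sInter.1 hj T hT, ha⟩
  · intro i hf h
    refine Set.mem_sInter.2 fun T hT => hT.2.2.1 i hf ?_
    cases h with
    | inl h => exact Or.inl (Set.mem_sInter.1 h T hT)
    | inr h => exact Or.inr (Set.mem_sInter.1 h T hT)
  · intro i hf h
    refine Set.mem_sInter.2 fun T hT => hT.2.2.2 i hf fun r => ?_
    obtain ⟨c, v, hv, he⟩ := h r
    exact ⟨c, v, Set.mem_sInter.1 hv T hT, he⟩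

lemma leastClosure_subset {T : Set (Fin n)} (hT : P.Closed T) : P.leastClosure ⊆ T :=
  Set.sInter_subset_of_mem hT

lemma eval_L {i x} (hf : P.form i = SNFForm.L) :
    P.eval x i = P.a0 i + ∑ j, P.a i j * x j := by
  simp only [SNFPPS.eval, hf]

lemma eval_Q {i x} (hf : P.form i = SNFForm.Q) :
    P.eval x i = x (P.quadL i) * x (P.quadR i) := by
  simp only [SNFPPS.eval, hf]

lemma eval_M {i x} (hf : P.form i = SNFForm.M) :
    P.eval x i = gameVal (Matrix.of fun j k => (P.entry i j k).elim 1 x) := by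
  simp only [SNFPPS.eval, hf]

lemma fixMax_L {σ i x} (hf : P.form i = SNFForm.L) :
    P.fixMax σ x i = P.a0 i + ∑ j, P.a i j * x j := by
  simp only [SNFPPS.fixMax, hf]

lemma fixMax_Q {σ i x} (hf : P.form i = SNFForm.Q) :
    P.fixMax σ x i = x (P.quadL i) * x (P.quadR i) := by
  simp only [SNFPPS.fixMax, hf]

lemma fixMax_M {σ i x} (hf : P.form i = SNFForm.M) :
    P.fixMax σ x i = ⨅ k : Fin (P.nc i), ∑ j, σ i j * (P.entry i j k).elim 1 x := by
  simp only [SNFPPS.fixMax, hf]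

end SNFPPS

section ElimAux

lemma elim_nonneg {n : ℕ} (o : Option (Fin n)) {x : Fin n → ℝ} (hx : x ∈ box01 n) :
    0 ≤ o.elim 1 x := by
  cases o with
  | none => norm_num
  | some v => exact (hx v).1

lemma elim_le_one {n : ℕ} (o : Option (Fin n)) {x : Fin n → ℝ} (hx : x ∈ box01 n) :
    o.elim 1 x ≤ 1 := by
  cases o with
  | none => norm_num
  | some v => exact (hx v).2

lemma elim_mono {n : ℕ} (o : Option (Fin n)) {x y : Fin n → ℝ} (hxy : x ≤ y) :
    o.elim 1 x ≤ o.elim 1 y := by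
  cases o with
  | none => exact le_refl 1
  | some v => exact hxy v

end ElimAux

/-- For an SNF minimax-PPS with greatest fixed point `g*` and least
closure set `S`, there is a deterministic policy `σ` for the max player such that
`(g*_{σ,*})_i = 1` for every `i ∉ S`; in particular `g*_i = 1` for all `i ∉ S`, and
therefore `g*_i < 1` iff `i ∈ S`. -/
theorem snf_complement_leastClosure_eq_one {n : ℕ} (P : SNFPPS n)
    (g : Fin n → ℝ) (hg : IsGFP P.eval g) :
    ∃ σ : (i : Fin n) → Fin (P.nr i) → ℝ,
      (∀ i, ∃ j0 : Fin (P.nr i), σ i = fun j => if j = j0 then (1 : ℝ) else 0) ∧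
      (∀ gσ, IsGFP (P.fixMax σ) gσ → ∀ i, i ∉ P.leastClosure → gσ i = 1) ∧
      (∀ i, i ∉ P.leastClosure → g i = 1) ∧
      (∀ i, g i < 1 ↔ i ∈ P.leastClosure) := by
  classical
  have hclosed := P.closed_leastClosure
  set S0 := P.leastClosure with hS0def
  have hgbox := hg.1
  have hgfix : ∀ j, P.eval g j = g j := fun j => congrFun hg.2.1 j
  -- consequences of i ∉ S0
  have hL1 : ∀ i, i ∉ S0 → P.form i = SNFForm.L → P.a0 i + ∑ j, P.a i j = 1 := by
    intro i hi hf
    by_contra h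
    exact hi (hclosed.1 i hf (lt_of_le_of_ne (P.a_sum_le_one i) h))
  have hL2 : ∀ i, i ∉ S0 → P.form i = SNFForm.L → ∀ j, j ∈ S0 → P.a i j = 0 := by
    intro i hi hf j hj
    by_contra h
    exact hi (hclosed.2.1 i hf ⟨j, hj, h⟩)
  have hQ : ∀ i, i ∉ S0 → P.form i = SNFForm.Q → P.quadL i ∉ S0 ∧ P.quadR i ∉ S0 := by
    intro i hi hf
    constructor
    · intro h; exact hi (hclosed.2.2.1 i hf (Or.inl h))
    · intro h; exact hi (hclosed.2.2.1 i hf (Or.inr h))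
  have hM : ∀ i, i ∉ S0 → P.form i = SNFForm.M →
      ∃ r : Fin (P.nr i), ∀ c v, P.entry i r c = some v → v ∉ S0 := by
    intro i hi hf
    by_contra h
    push_neg at h
    refine hi (hclosed.2.2.2 i hf fun r => ?_)
    obtain ⟨c, v, he, hv⟩ := h r
    exact ⟨c, v, hv, he⟩
  -- choose rows
  have hrow : ∀ i, ∃ r : Fin (P.nr i),
      P.form i = SNFForm.M → i ∉ S0 → ∀ c v, P.entry i r c = some v → v ∉ S0 := by
    intro i
    by_cases h : P.form i = SNFForm.M ∧ i ∉ S0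
    · obtain ⟨r, hr⟩ := hM i h.2 h.1
      exact ⟨r, fun _ _ => hr⟩
    · exact ⟨⟨0, P.nr_pos i⟩, fun h1 h2 => absurd ⟨h1, h2⟩ h⟩
  choose j0 hj0 using hrow
  set σ : (i : Fin n) → Fin (P.nr i) → ℝ := fun i j => if j = j0 i then 1 else 0 with hσdef
  have hσsum : ∀ (i : Fin n) (v : Fin (P.nr i) → ℝ), (∑ j, σ i j * v j) = v (j0 i) := by
    intro i v
    rw [Finset.sum_eq_single (j0 i)]
    · simp [hσdef]
    · intro b _ hb; simp [hσdef, hb]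
    · simp
  have hfixM : ∀ (x : Fin n → ℝ) i, P.form i = SNFForm.M →
      P.fixMax σ x i = ⨅ k : Fin (P.nc i), (P.entry i (j0 i) k).elim 1 x := by
    intro x i hf
    rw [P.fixMax_M hf]
    exact congrArg _ (funext fun k => hσsum i _)
  -- bounds for matrices
  have hB0 : ∀ (x : Fin n → ℝ), x ∈ box01 n → ∀ (i : Fin n) j k,
      (0:ℝ) ≤ (Matrix.of fun j k => (P.entry i j k).elim 1 x) j k :=
    fun x hx i j k => elim_nonneg _ hx
  have hB1 : ∀ (x : Fin n → ℝ), x ∈ box01 n → ∀ (i : Fin n) j k,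
      (Matrix.of fun j k => (P.entry i j k).elim 1 x) j k ≤ 1 :=
    fun x hx i j k => elim_le_one _ hx
  -- linear part facts
  have hlin_box : ∀ (x : Fin n → ℝ), x ∈ box01 n → ∀ i,
      0 ≤ P.a0 i + ∑ j, P.a i j * x j ∧ P.a0 i + ∑ j, P.a i j * x j ≤ 1 := by
    intro x hx i
    constructor
    · have h1 : (0:ℝ) ≤ ∑ j, P.a i j * x j :=
        Finset.sum_nonneg fun j _ => mul_nonneg (P.a_nonneg i j) (hx j).1
      linarith [P.a0_nonneg i]
    · have h1 : ∑ j, P.a i j * x j ≤ ∑ j, P.a i j := by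
        apply Finset.sum_le_sum
        intro j _
        have := mul_le_mul_of_nonneg_left (hx j).2 (P.a_nonneg i j)
        linarith
      linarith [P.a_sum_le_one i]
  -- eval maps box to box
  have hevalbox : ∀ x ∈ box01 n, P.eval x ∈ box01 n := by
    intro x hx i
    cases hf : P.form i with
    | L => rw [P.eval_L hf]; exact hlin_box x hx i
    | Q =>
      rw [P.eval_Q hf]
      constructor
      · exact mul_nonneg (hx _).1 (hx _).1
      · nlinarith [(hx (P.quadL i)).1, (hx (P.quadL i)).2, (hx (P.quadR i)).1, (hx (P.quadR i)).2]
    | M =>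
      rw [P.eval_M hf]
      exact ⟨GVAux.gameVal_nonneg _ (P.nr_pos i) (P.nc_pos i) (hB0 x hx i) (hB1 x hx i),
        GVAux.gameVal_le_one _ (P.nr_pos i) (P.nc_pos i) (hB0 x hx i) (hB1 x hx i)⟩
  -- eval monotone on box
  have hevalmono : ∀ x ∈ box01 n, ∀ y ∈ box01 n, x ≤ y → P.eval x ≤ P.eval y := by
    intro x hx y hy hxy i
    cases hf : P.form i with
    | L =>
      rw [P.eval_L hf, P.eval_L hf]
      have h1 : ∑ j, P.a i j * x j ≤ ∑ j, P.a i j * y j :=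
        Finset.sum_le_sum fun j _ => mul_le_mul_of_nonneg_left (hxy j) (P.a_nonneg i j)
      linarith
    | Q =>
      rw [P.eval_Q hf, P.eval_Q hf]
      exact mul_le_mul (hxy _) (hxy _) (hx _).1 (hy _).1
    | M =>
      rw [P.eval_M hf, P.eval_M hf]
      exact GVAux.gameVal_mono _ (P.nr_pos i) (P.nc_pos i) _ (hB0 x hx i) (hB1 y hy i)
        (hB0 y hy i) (fun j k => elim_mono _ hxy)
  -- eval K-invariance
  have hevalK : ∀ x ∈ box01 n, (∀ i, i ∉ S0 → x i = 1) → ∀ i, i ∉ S0 → P.eval x i = 1 := by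
    intro x hx hx1 i hi
    cases hf : P.form i with
    | L =>
      rw [P.eval_L hf]
      have h1 : ∀ j ∈ Finset.univ, P.a i j * x j = P.a i j := by
        intro j _
        by_cases hj : j ∈ S0
        · rw [hL2 i hi hf j hj]; ring
        · rw [hx1 j hj, mul_one]
      rw [Finset.sum_congr rfl h1, hL1 i hi hf]
    | Q =>
      rw [P.eval_Q hf]
      obtain ⟨h1, h2⟩ := hQ i hi hf
      rw [hx1 _ h1, hx1 _ h2, mul_one]
    | M =>
      rw [P.eval_M hf]
      apply GVAux.gameVal_row_ones _ (P.nr_pos i) (P.nc_pos i) (hB0 x hx i) (hB1 x hx i) (j0 i)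
      intro c
      show (P.entry i (j0 i) c).elim 1 x = 1
      cases he : P.entry i (j0 i) c with
      | none => rfl
      | some v => exact hx1 v (hj0 i hf hi c v he)
  -- fixMax facts
  have hfixbox : ∀ x ∈ box01 n, P.fixMax σ x ∈ box01 n := by
    intro x hx i
    cases hf : P.form i with
    | L => rw [P.fixMax_L hf]; exact hlin_box x hx i
    | Q =>
      rw [P.fixMax_Q hf]
      constructor
      · exact mul_nonneg (hx _).1 (hx _).1
      · nlinarith [(hx (P.quadL i)).1, (hx (P.quadL i)).2, (hx (P.quadR i)).1, (hx (P.quadR i)).2]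
    | M =>
      rw [hfixM x i hf]
      haveI : Nonempty (Fin (P.nc i)) := ⟨⟨0, P.nc_pos i⟩⟩
      constructor
      · exact le_ciInf fun k => elim_nonneg _ hx
      · exact le_trans (ciInf_le (Set.finite_range _).bddBelow (Classical.arbitrary _))
          (elim_le_one _ hx)
  have hfixmono : ∀ x ∈ box01 n, ∀ y ∈ box01 n, x ≤ y → P.fixMax σ x ≤ P.fixMax σ y := by
    intro x hx y hy hxy i
    cases hf : P.form i with
    | L =>
      rw [P.fixMax_L hf, P.fixMax_L hf]
      have h1 : ∑ j, P.a i j * x j ≤ ∑ j, P.a i j * y j :=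
        Finset.sum_le_sum fun j _ => mul_le_mul_of_nonneg_left (hxy j) (P.a_nonneg i j)
      linarith
    | Q =>
      rw [P.fixMax_Q hf, P.fixMax_Q hf]
      exact mul_le_mul (hxy _) (hxy _) (hx _).1 (hy _).1
    | M =>
      rw [hfixM x i hf, hfixM y i hf]
      haveI : Nonempty (Fin (P.nc i)) := ⟨⟨0, P.nc_pos i⟩⟩
      exact le_ciInf fun k => le_trans (ciInf_le (Set.finite_range _).bddBelow k)
        (elim_mono _ hxy)
  have hfixK : ∀ x ∈ box01 n, (∀ i, i ∉ S0 → x i = 1) → ∀ i, i ∉ S0 →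
      P.fixMax σ x i = 1 := by
    intro x hx hx1 i hi
    cases hf : P.form i with
    | L =>
      rw [P.fixMax_L hf]
      have h1 : ∀ j ∈ Finset.univ, P.a i j * x j = P.a i j := by
        intro j _
        by_cases hj : j ∈ S0
        · rw [hL2 i hi hf j hj]; ring
        · rw [hx1 j hj, mul_one]
      rw [Finset.sum_congr rfl h1, hL1 i hi hf]
    | Q =>
      rw [P.fixMax_Q hf]
      obtain ⟨h1, h2⟩ := hQ i hi hf
      rw [hx1 _ h1, hx1 _ h2, mul_one]
    | M =>
      rw [hfixM x i hf]
      haveI : Nonempty (Fin (P.nc i)) := ⟨⟨0, P.nc_pos i⟩⟩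
      have h1 : ∀ k : Fin (P.nc i), (P.entry i (j0 i) k).elim 1 x = 1 := by
        intro k
        cases he : P.entry i (j0 i) k with
        | none => rfl
        | some v => exact hx1 v (hj0 i hf hi k v he)
      apply le_antisymm
      · exact le_trans (ciInf_le (Set.finite_range _).bddBelow (Classical.arbitrary _))
          (le_of_eq (h1 _))
      · exact le_ciInf fun k => (h1 k).ge
  -- apply Knaster-Tarski
  obtain ⟨z, hzbox, hzfix, hzone⟩ := kt_fixed P.eval S0 hevalbox hevalmono hevalK
  have hg1 : ∀ i, i ∉ S0 → g i = 1 := by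
    intro i hi
    have hle := hg.2.2 z hzbox hzfix
    exact le_antisymm (hg.1 i).2 ((hzone i hi).symm.trans_le (hle i))
  refine ⟨σ, fun i => ⟨j0 i, rfl⟩, ?_, hg1, ?_⟩
  · intro gσ hgσ i hi
    obtain ⟨z2, hz2box, hz2fix, hz2one⟩ := kt_fixed (P.fixMax σ) S0 hfixbox hfixmono hfixK
    have hle := hgσ.2.2 z2 hz2box hz2fix
    exact le_antisymm (hgσ.1 i).2 ((hz2one i hi).symm.trans_le (hle i))
  · intro i
    constructor
    · intro hlt
      by_contra hi
      rw [hg1 i hi] at hlt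
      exact lt_irrefl 1 hlt
    · intro hi
      -- show {i | g i < 1} is closed, then S0 ⊆ it
      have hcl : P.Closed {i | g i < 1} := by
        refine ⟨?_, ?_, ?_, ?_⟩
        · intro i hf hlt
          show g i < 1
          rw [← hgfix i, P.eval_L hf]
          have h1 : ∑ j, P.a i j * g j ≤ ∑ j, P.a i j := by
            apply Finset.sum_le_sum
            intro j _
            have := mul_le_mul_of_nonneg_left (hgbox j).2 (P.a_nonneg i j)
            linarith
          linarith
        · rintro i hf ⟨j, hj, ha⟩
          show g i < 1
          rw [← hgfix i, P.eval_L hf]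
          have hj' : g j < 1 := hj
          have hlt : ∑ k, P.a i k * g k < ∑ k, P.a i k := by
            apply Finset.sum_lt_sum
            · intro k _
              have := mul_le_mul_of_nonneg_left (hgbox k).2 (P.a_nonneg i k)
              linarith
            · refine ⟨j, Finset.mem_univ j, ?_⟩
              have hpos : 0 < P.a i j := lt_of_le_of_ne (P.a_nonneg i j) (Ne.symm ha)
              nlinarith
          linarith [P.a_sum_le_one i, P.a0_nonneg i]
        · intro i hf h
          show g i < 1
          rw [← hgfix i, P.eval_Q hf]
          cases h with
          | inl h =>
            have h' : g (P.quadL i) < 1 := h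
            nlinarith [(hgbox (P.quadL i)).1, (hgbox (P.quadR i)).1, (hgbox (P.quadR i)).2]
          | inr h =>
            have h' : g (P.quadR i) < 1 := h
            nlinarith [(hgbox (P.quadL i)).1, (hgbox (P.quadR i)).1, (hgbox (P.quadL i)).2]
        · intro i hf h
          show g i < 1
          choose c v hv he using h
          haveI : Nonempty (Fin (P.nr i)) := ⟨⟨0, P.nr_pos i⟩⟩
          set ε := Finset.univ.inf' Finset.univ_nonempty
            (fun r : Fin (P.nr i) => 1 - g (v r)) with hεdef
          have hεpos : 0 < ε := by
            rw [hεdef, Finset.lt_inf'_iff]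
            intro r _
            have : g (v r) < 1 := hv r
            linarith
          rw [← hgfix i, P.eval_M hf]
          apply GVAux.gameVal_lt_one _ (P.nr_pos i) (P.nc_pos i) (hB0 g hgbox i)
            (hB1 g hgbox i) c ε hεpos
          intro r
          show (P.entry i r (c r)).elim 1 g ≤ 1 - ε
          rw [he r]
          show g (v r) ≤ 1 - ε
          have := Finset.inf'_le (fun r : Fin (P.nr i) => 1 - g (v r)) (Finset.mem_univ r)
          rw [hεdef]
          linarith
      exact P.leastClosure_subset hcl hi
end

section
/- For any PPS x = P(x), exactly one of the following two cases holds: (i) the dependency graph of x = P(x) has a bottom strongly connected component S such that the induced subsystem x_S = P_S(x_S) is an LD-PPS (so P_S(x_S) ≡ B_S x_S for a stochastic matrix B_S); or (ii) every variable x_i either itself satisfies, or depends (via a directed path in the dependency graph) on a variable x_j satisfying, one of the following properties: (1) P_j(x) has a term of total degree 2 or more; (2) P_j(x) has a nonzero constant term, i.e., P_j(0) > 0; (3) P_j(1) < 1. -/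
open Filter Topology

lemma bad_iff_not_LD {n : ℕ} (Q : ProbPoly n) :
    ((∃ r, Q.p r ≠ 0 ∧ 2 ≤ ∑ v, Q.expo r v) ∨
      0 < Q.eval (fun _ => 0) ∨ Q.eval (fun _ => 1) < 1) ↔ ¬ IsLDPoly Q := by
  have heval1 : Q.eval (fun _ => 1) = ∑ r, Q.p r := by
    simp [ProbPoly.eval]
  have hterm0 : ∀ r : Fin Q.numTerms,
      (∏ i, (0:ℝ) ^ Q.expo r i) = if (∀ i, Q.expo r i = 0) then 1 else 0 := by
    intro r
    by_cases h : ∀ i, Q.expo r i = 0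
    · simp [h]
    · push_neg at h
      obtain ⟨i, hi⟩ := h
      rw [if_neg]
      · exact Finset.prod_eq_zero (Finset.mem_univ i) (zero_pow hi)
      · push_neg; exact ⟨i, hi⟩
  constructor
  · rintro (⟨r, hp, hdeg⟩ | h0 | h1) ⟨hld1, hld2⟩
    · have := hld1 r hp; omega
    · have : Q.eval (fun _ => 0) = 0 := by
        unfold ProbPoly.eval
        apply Finset.sum_eq_zero
        intro r _
        by_cases hp : Q.p r = 0
        · simp [hp]
        · have hd := hld1 r hp
          rw [hterm0 r, if_neg, mul_zero]
          intro hall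
          simp only [hall] at hd
          simp at hd
      linarith
    · rw [heval1, hld2] at h1; linarith
  · intro h
    rw [IsLDPoly, not_and_or] at h
    rcases h with h | h
    · push_neg at h
      obtain ⟨r, hp, hdeg⟩ := h
      rcases Nat.lt_or_ge (∑ v, Q.expo r v) 2 with hlt | hge
      · -- degree 0 or 1; since ≠ 1, degree 0, so constant term
        interval_cases h : (∑ v, Q.expo r v)
        · right; left
          have hall : ∀ i, Q.expo r i = 0 := by
            intro i
            have := Finset.sum_eq_zero_iff_of_nonneg (f := Q.expo r)
              (fun i _ => Nat.zero_le _) |>.mp h i (Finset.mem_univ i)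
            exact this
          unfold ProbPoly.eval
          have hle : Q.p r ≤ ∑ r', Q.p r' * ∏ i, (0:ℝ) ^ Q.expo r' i := by
            have : Q.p r * ∏ i, (0:ℝ) ^ Q.expo r i = Q.p r := by
              rw [hterm0 r, if_pos hall, mul_one]
            rw [← this]
            apply Finset.single_le_sum (f := fun r' => Q.p r' * ∏ i, (0:ℝ) ^ Q.expo r' i)
              _ (Finset.mem_univ r)
            intro r' _
            apply mul_nonneg (Q.p_nonneg r')
            apply Finset.prod_nonneg
            intro i _
            positivity
          exact lt_of_lt_of_le (lt_of_le_of_ne (Q.p_nonneg r) (Ne.symm hp)) hle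
        · exact absurd rfl hdeg
      · exact Or.inl ⟨r, hp, hge⟩
    · right; right
      rw [heval1]
      exact lt_of_le_of_ne Q.p_sum_le_one h

/-- For any PPS, exactly one of the following holds: (i) the dependency
graph has a bottom strongly connected component inducing an LD subsystem; or (ii)
every variable depends (via a directed path, possibly of length 0) on a variable
`x_j` such that `P_j` has a term of degree ≥ 2, or `P_j(0) > 0`, or `P_j(1) < 1`. -/
theorem pps_LD_BSCC_dichotomy {n : ℕ} (P : PPS n) :
    Xor'
      (IsLDBottom P.depends (fun i => IsLDPoly (P.poly i)))
      (∀ i : Fin n, ∃ j : Fin n, Relation.ReflTransGen P.depends i j ∧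
        ((∃ r, (P.poly j).p r ≠ 0 ∧ 2 ≤ ∑ v, (P.poly j).expo r v) ∨
         0 < (P.poly j).eval (fun _ => 0) ∨
         (P.poly j).eval (fun _ => 1) < 1)) := by
  classical
  -- rewrite the badness condition
  have hbad : ∀ j : Fin n,
      ((∃ r, (P.poly j).p r ≠ 0 ∧ 2 ≤ ∑ v, (P.poly j).expo r v) ∨
        0 < (P.poly j).eval (fun _ => 0) ∨ (P.poly j).eval (fun _ => 1) < 1) ↔
      ¬ IsLDPoly (P.poly j) := fun j => bad_iff_not_LD (P.poly j)
  by_cases hA : IsLDBottom P.depends (fun i => IsLDPoly (P.poly i))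
  · left
    refine ⟨hA, ?_⟩
    intro hB
    obtain ⟨S, ⟨i, hiS⟩, _hmut, hclosed, hld⟩ := hA
    obtain ⟨j, hij, hbadj⟩ := hB i
    have hjS : j ∈ S := by
      clear hbadj
      induction hij with
      | refl => exact hiS
      | tail _ hd ih => exact hclosed _ ih _ hd
    exact (hbad j).mp hbadj (hld j hjS)
  · right
    refine ⟨?_, hA⟩
    intro i
    by_contra hno
    -- every j reachable from i is LD
    have hLD : ∀ j, Relation.ReflTransGen P.depends i j → IsLDPoly (P.poly j) := by
      intro j hij
      by_contra hnot
      exact hno ⟨j, hij, (hbad j).mpr hnot⟩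
    -- find a BSCC inside the reachable set
    apply hA
    have hreach : ∀ {a b c : Fin n}, Relation.ReflTransGen P.depends a b →
        Relation.ReflTransGen P.depends b c → Relation.ReflTransGen P.depends a c :=
      fun h1 h2 => h1.trans h2
    set f : Fin n → ℕ := fun k =>
      (Finset.univ.filter (fun m => Relation.ReflTransGen P.depends k m)).card with hf
    have hT : i ∈ Finset.univ.filter (fun k => Relation.ReflTransGen P.depends i k) := by
      simp [Relation.ReflTransGen.refl]
    obtain ⟨j0, hj0T, hj0min⟩ :=
      Finset.exists_min_image _ f ⟨i, hT⟩
    simp only [Finset.mem_filter, Finset.mem_univ, true_and] at hj0T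
    refine ⟨{m | Relation.ReflTransGen P.depends j0 m}, ⟨j0, Relation.ReflTransGen.refl⟩,
      ?_, ?_, ?_⟩
    · -- mutual reachability
      intro a ha b hb
      simp only [Set.mem_setOf_eq] at ha hb
      -- show a reaches j0
      have haT : a ∈ Finset.univ.filter (fun k => Relation.ReflTransGen P.depends i k) := by
        simp only [Finset.mem_filter, Finset.mem_univ, true_and]
        exact hreach hj0T ha
      have hsub : (Finset.univ.filter (fun m => Relation.ReflTransGen P.depends a m)) ⊆
          (Finset.univ.filter (fun m => Relation.ReflTransGen P.depends j0 m)) := by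
        intro m hm
        simp only [Finset.mem_filter, Finset.mem_univ, true_and] at hm ⊢
        exact hreach ha hm
      have hcard : f j0 ≤ f a := hj0min a haT
      have heq := Finset.eq_of_subset_of_card_le hsub hcard
      have hj0mem : j0 ∈ (Finset.univ.filter (fun m => Relation.ReflTransGen P.depends j0 m)) := by
        simp [Relation.ReflTransGen.refl]
      rw [← heq] at hj0mem
      simp only [Finset.mem_filter, Finset.mem_univ, true_and] at hj0mem
      exact hreach hj0mem hb
    · intro a ha j hdep
      exact Relation.ReflTransGen.tail ha hdep
    · intro a ha
      exact hLD a (hreach hj0T ha)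
end
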